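/- For every lambda term M in β-normal form and every normal context C[·], the reduction sequence starting from ⟨C[·], M•⟩ in Λ^rb terminates in the atom ⌈C[M]⌉ (up to α-equivalence). -/

import Mathlib

/-- Lambda terms, extended with "atoms" `⌈M⌉` that wrap a term. -/
inductive Tm : Type
  | var : String → Tm
  | app : Tm → Tm → Tm
  | lam : String → Tm → Tm
  | atom : Tm → Tm
deriving DecidableEq

namespace Tm

/-- A pure lambda term (an element of Λ): contains no atoms. -/
def Pure : Tm → Prop
  | var _ => True
  | app a b => Pure a ∧ Pure b
  | lam _ m => Pure m
  | atom _ => False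

/-- Free variables; atoms have no free variables. -/
def FV : Tm → Finset String
  | var x => {x}
  | app a b => FV a ∪ FV b
  | lam x m => FV m \ {x}
  | atom _ => ∅

/-- Substitution; atoms are unaffected. -/
def subst : Tm → String → Tm → Tm
  | var y, x, N => if y = x then N else var y
  | app a b, x, N => app (a.subst x N) (b.subst x N)
  | lam y m, x, N => if y = x then lam y m else lam y (m.subst x N)
  | atom m, _, _ => atom m

/-- `apps M [N₁,…,Nₙ] = M N₁ ⋯ Nₙ`. -/
def apps (M : Tm) (Ns : List Tm) : Tm := Ns.foldl app M

/-- Replace each free variable `x` (not in the bound list) by the atom `⌈x⌉`. -/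
def bulletAux : List String → Tm → Tm
  | bs, var x => if x ∈ bs then var x else atom (var x)
  | bs, app a b => app (bulletAux bs a) (bulletAux bs b)
  | bs, lam x m => lam x (bulletAux (x :: bs) m)
  | _, atom m => atom m

/-- `M•`: replace each free variable `x` of `M` by the atom `⌈x⌉`. -/
def bullet (M : Tm) : Tm := bulletAux [] M

/-- Read-back `RB : Λ• → Λ`: `RB (M N) = RB M (RB N)`,
`RB (λx.M) = λx.RB (M[x:=⌈x⌉])`, `RB ⌈M⌉ = M` (stated structurally,
which agrees with the above since `RB (M[x:=⌈x⌉]) = RB M` here). -/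
def RB : Tm → Tm
  | var x => var x
  | app a b => app (RB a) (RB b)
  | lam x m => lam x (RB m)
  | atom m => m

end Tm

/-- Membership in Λ• = { M• | M ∈ Λ }. -/
def IsBullet (M : Tm) : Prop := ∃ P : Tm, P.Pure ∧ M = P.bullet

/-- One-step β-reduction (atoms are inert). -/
inductive Beta : Tm → Tm → Prop
  | beta (x M N) : Beta (.app (.lam x M) N) (M.subst x N)
  | appL {M M'} (N) : Beta M M' → Beta (.app M N) (.app M' N)
  | appR (M) {N N'} : Beta N N' → Beta (.app M N) (.app M N')
  | lam (x) {M M'} : Beta M M' → Beta (.lam x M) (.lam x M')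

/-- β-normal form. -/
def NF (M : Tm) : Prop := ∀ N, ¬ Beta M N

/-- One-hole contexts. -/
inductive Ctx : Type
  | hole
  | appL : Ctx → Tm → Ctx
  | appR : Tm → Ctx → Ctx
  | lam : String → Ctx → Ctx

namespace Ctx

/-- `C[M]`: fill the hole of `C` with `M`. -/
def fill : Ctx → Tm → Tm
  | hole, M => M
  | appL C N, M => .app (C.fill M) N
  | appR N C, M => .app N (C.fill M)
  | lam x C, M => .lam x (C.fill M)

/-- Composition of contexts: `(C.comp D)[M] = C[D[M]]`. -/
def comp : Ctx → Ctx → Ctx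
  | hole, D => D
  | appL C N, D => appL (C.comp D) N
  | appR N C, D => appR N (C.comp D)
  | lam x C, D => lam x (C.comp D)

/-- A context over pure lambda terms. -/
def Pure : Ctx → Prop
  | hole => True
  | appL C N => C.Pure ∧ N.Pure
  | appR N C => N.Pure ∧ C.Pure
  | lam _ C => C.Pure

end Ctx

/-- A context is normal iff it maps β-normal forms to β-normal forms. -/
def NormalCtx (C : Ctx) : Prop := ∀ M, NF M → NF (C.fill M)

/-- The set Λ^rb: atoms `⌈M⌉`; pairs `⟨C[·], M⟩` with `M ∈ Λ•`
(applications `M ⃗N` with head in `Λ•` are encoded inside the `Tm`);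
and `⟨C[·], M ⃗N⟩` with `M ∈ Λ^rb`, `⃗N ∈ Λ•`. -/
inductive Rb : Type
  | atom : Tm → Rb
  | pair : Ctx → Tm → Rb
  | papp : Ctx → Rb → List Tm → Rb

namespace Rb

/-- Well-formedness: side conditions of membership in Λ^rb. -/
def WF : Rb → Prop
  | atom M => M.Pure
  | pair C M => C.Pure ∧ IsBullet M
  | papp C M Ns => C.Pure ∧ M.WF ∧ ∀ N ∈ Ns, IsBullet N

/-- Read-back on Λ^rb. -/
def rb : Rb → Tm
  | atom M => M
  | pair C M => C.fill M.RB
  | papp C M Ns => C.fill (Tm.apps M.rb (Ns.map Tm.RB))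

end Rb

/-- The reduction relation on Λ^rb (Definition 4 of the paper). -/
inductive Step : Rb → Rb → Prop
  | collapse (C M) : Step (.pair C (.atom M)) (.atom (C.fill M))
  | lam (C x M) :
      Step (.pair C (.lam x M))
        (.pair (C.comp (.lam x .hole)) (M.subst x (.atom (.var x))))
  | split (C M N₀ Ns) :
      Step (.pair C (Tm.apps (.atom M) (N₀ :: Ns)))
        (.papp C (.pair (.appR M .hole) N₀) Ns)
  | beta (C x M N₀ Ns) :
      Step (.pair C (Tm.apps (.lam x M) (N₀ :: Ns)))
        (.pair C (Tm.apps (M.subst x N₀) Ns))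
  | collapseNil (C M) : Step (.papp C (.atom M) []) (.atom (C.fill M))
  | splitCons (C M N₀ Ns) :
      Step (.papp C (.atom M) (N₀ :: Ns)) (.papp C (.pair (.appR M .hole) N₀) Ns)
  | cong (C Ns) {M M'} : Step M M' → Step (.papp C M Ns) (.papp C M' Ns)

/-- The steps of `Step` that contract a β-redex (rule 4, possibly under head congruence). -/
inductive BStep : Rb → Rb → Prop
  | beta (C x M N₀ Ns) :
      BStep (.pair C (Tm.apps (.lam x M) (N₀ :: Ns)))
        (.pair C (Tm.apps (M.subst x N₀) Ns))
  | cong (C Ns) {M M'} : BStep M M' → BStep (.papp C M Ns) (.papp C M' Ns)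

/-- Contraction of the leftmost β-redex. -/
inductive Leftmost : Tm → Tm → Prop
  | beta (x M N) : Leftmost (.app (.lam x M) N) (M.subst x N)
  | lam (x) {M M'} : Leftmost M M' → Leftmost (.lam x M) (.lam x M')
  | appL {M M'} (N) : (∀ x M₀, M ≠ Tm.lam x M₀) → Leftmost M M' →
      Leftmost (.app M N) (.app M' N)
  | appR (M) {N N'} : NF M → (∀ x M₀, M ≠ Tm.lam x M₀) → Leftmost N N' →
      Leftmost (.app M N) (.app M N')

/-!
A pure β-normal term is either an abstraction `λx.m` with `m` normal, or a spine `x N₁ ⋯ Nₖ`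
with normal arguments. For `λx.m`, rule 2 moves the binder into the context, and substituting
`⌈x⌉` for the bound `x` in `(λx.m)•` yields exactly `m•`. For a spine, rule 3 splits off the
head atom `⌈x⌉`; each argument `Nᵢ•` is then read back, by induction, in the context
`⌈x N₁ ⋯ Nᵢ₋₁⌉[·]`, and the atom so obtained is fed to the next argument by head congruence,
until the empty argument list collapses into `⌈C[x N₁ ⋯ Nₖ]⌉`.
-/

namespace Tm

theorem apps_append_singleton (M : Tm) (Ns : List Tm) (N : Tm) :
    apps M (Ns ++ [N]) = .app (apps M Ns) N := by
  simp [apps]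

theorem bullet_apps (M : Tm) (Ns : List Tm) :
    (apps M Ns).bullet = apps M.bullet (Ns.map bullet) := by
  induction Ns generalizing M with
  | nil => rfl
  | cons N Ns ih => exact ih (.app M N)

theorem bulletAux_congr_of_mem_iff (M : Tm) {bs bs' : List String}
    (h : ∀ y, y ∈ bs ↔ y ∈ bs') : bulletAux bs M = bulletAux bs' M := by
  induction M generalizing bs bs' with
  | var x => simp only [bulletAux, h x]
  | app a b iha ihb => simp only [bulletAux, iha h, ihb h]
  | lam x m ihm => simp only [bulletAux, ihm (bs := x :: bs) (bs' := x :: bs') (by simp [h])]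
  | atom m => rfl

theorem subst_bulletAux_cons (M : Tm) {bs : List String} {x : String} (hx : x ∉ bs) :
    (bulletAux (x :: bs) M).subst x (.atom (.var x)) = bulletAux bs M := by
  induction M generalizing bs with
  | var y =>
    by_cases hyx : y = x
    · subst hyx; simp [bulletAux, subst, hx]
    · by_cases hy : y ∈ bs <;> simp [bulletAux, subst, hyx, hy]
  | app a b iha ihb => simp only [bulletAux, subst, iha hx, ihb hx]
  | lam y m ihm =>
    by_cases hyx : y = x
    · subst hyx
      simp only [bulletAux, subst, if_true]
      rw [bulletAux_congr_of_mem_iff m (bs' := y :: bs) (by simp)]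
    · simp only [bulletAux, subst, if_neg hyx]
      rw [bulletAux_congr_of_mem_iff m (bs' := x :: y :: bs) (by simp [or_left_comm]),
        ihm (by simp [hx, Ne.symm hyx])]
  | atom m => rfl

theorem subst_bulletAux_singleton (m : Tm) (x : String) :
    (bulletAux [x] m).subst x (.atom (.var x)) = m.bullet :=
  subst_bulletAux_cons m List.not_mem_nil

end Tm

namespace NF

theorem app_left {a b : Tm} (h : NF (.app a b)) : NF a := fun _ ha ↦ h _ (.appL b ha)

theorem app_right {a b : Tm} (h : NF (.app a b)) : NF b := fun _ hb ↦ h _ (.appR a hb)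

theorem lam_body {x : String} {m : Tm} (h : NF (.lam x m)) : NF m := fun _ hm ↦ h _ (.lam x hm)

end NF

inductive PureNormal : Tm → Prop
  | lam (x : String) {m : Tm} : PureNormal m → PureNormal (.lam x m)
  | spine (x : String) {Ns : List Tm} : (∀ N ∈ Ns, PureNormal N) →
      PureNormal (Tm.apps (.var x) Ns)

theorem PureNormal.of_pure_of_nf {M : Tm} (hM : M.Pure) (hnf : NF M) : PureNormal M := by
  induction M with
  | var x => exact .spine x (Ns := []) (by simp)
  | lam x m ihm => exact .lam x (ihm hM hnf.lam_body)
  | atom m => exact hM.elim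
  | app a b iha ihb =>
    have hb : PureNormal b := ihb hM.2 hnf.app_right
    cases iha hM.1 hnf.app_left with
    | @lam x m _ => exact absurd (Beta.beta x m b) (hnf _)
    | spine x hNs =>
      rw [← Tm.apps_append_singleton]
      exact .spine x fun N hN ↦ (List.mem_append.1 hN).elim (hNs N)
        fun h ↦ List.mem_singleton.1 h ▸ hb

theorem Ctx.fill_comp (C D : Ctx) (M : Tm) : (C.comp D).fill M = C.fill (D.fill M) := by
  induction C with
  | hole => rfl
  | appL C N ih | appR N C ih | lam x C ih => simp only [comp, fill, ih]

open Relation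

namespace Step

theorem reflTransGen_papp (C : Ctx) (Ns : List Tm) {M M' : Rb}
    (h : ReflTransGen Step M M') : ReflTransGen Step (.papp C M Ns) (.papp C M' Ns) :=
  h.lift (fun M ↦ Rb.papp C M Ns) fun _ _ ↦ cong C Ns

theorem papp_atom_bullet_reflTransGen {Ns : List Tm}
    (hNs : ∀ N ∈ Ns, ∀ D : Ctx, ReflTransGen Step (.pair D N.bullet) (.atom (D.fill N)))
    (C : Ctx) (P : Tm) :
    ReflTransGen Step (.papp C (.atom P) (Ns.map Tm.bullet)) (.atom (C.fill (Tm.apps P Ns))) := by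
  induction Ns generalizing P with
  | nil => exact .single (collapseNil C P)
  | cons N Ns ih =>
    have hN : ReflTransGen Step (.pair (.appR P .hole) N.bullet) (.atom (.app P N)) :=
      hNs N (by simp) _
    exact .head (splitCons C P _ _) <| (reflTransGen_papp C _ hN).trans <|
      ih (fun N' hN' ↦ hNs N' (by simp [hN'])) (.app P N)

end Step

theorem PureNormal.reflTransGen_pair_bullet {M : Tm} (hM : PureNormal M) (C : Ctx) :
    ReflTransGen Step (.pair C M.bullet) (.atom (C.fill M)) := by
  induction hM generalizing C with
  | @lam x m _ ih =>
    have hlam := Step.lam C x (Tm.bulletAux [x] m)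
    have hm := ih (C.comp (.lam x .hole))
    rw [Tm.subst_bulletAux_singleton] at hlam
    rw [Ctx.fill_comp] at hm
    exact .head hlam hm
  | @spine x Ns _ ih =>
    rw [Tm.bullet_apps]
    cases Ns with
    | nil => exact .single (Step.collapse C (.var x))
    | cons N Ns =>
      have hN := ih N (by simp) (.appR (.var x) .hole)
      exact .head (Step.split C (.var x) _ _) <| (Step.reflTransGen_papp C _ hN).trans <|
        Step.papp_atom_bullet_reflTransGen (fun N' hN' ↦ ih N' (by simp [hN'])) C _

theorem normal_term_readback_general (C : Ctx) (M : Tm)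
    (hM : M.Pure) (hnf : NF M) :
    Relation.ReflTransGen Step (Rb.pair C M.bullet) (Rb.atom (C.fill M)) :=
  (PureNormal.of_pure_of_nf hM hnf).reflTransGen_pair_bullet C

/-- For β-normal `M` and normal `C`, the sequence from `⟨C[·], M•⟩` ends in `⌈C[M]⌉`. -/
theorem normal_term_readback (C : Ctx) (M : Tm)
    (hC : NormalCtx C) (hCp : C.Pure) (hM : M.Pure) (hnf : NF M) :
    Relation.ReflTransGen Step (Rb.pair C M.bullet) (Rb.atom (C.fill M)) :=
  normal_term_readback_general C M hM hnf
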